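/- Let N ∈ B(H) be normal, C a conjugation with CNC = -N*, and Δ ⊆ ℂ a Borel set with Δ = -Δ. Then C leaves ran(E_N(Δ)) invariant, and the restriction C₀ of C to ran(E_N(Δ)) is a conjugation satisfying C₀ N₀ C₀ = -N₀*, where N₀ is the restriction of N to the reducing subspace ran(E_N(Δ)). -/

import Mathlib

/-!
The map `A ↦ C E_N(-A) C` is again a spectral measure for `N`: it is a projection-valued
measure because `C` is an isometric involution, and `CNC = -N*` turns the first moment
`⟪C x, N (C x)⟫` of the scalar measure of `C x` into `-⟪x, N x⟫`, which the reflection `z ↦ -z`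
corrects. Spectral measures are unique, so `C E_N(Δ) C = E_N(-Δ) = E_N(Δ)`.

Uniqueness is derived from the first-moment condition alone. On `ran P(B)` with `B` in a disc
of radius `ε` about `z`, the numerical range of `N - z` lies in that disc, so by polarization
`‖(N - z) x‖ ≤ 2ε‖x‖`, and likewise for `N* - z̄`; hence spectral subspaces over distant small
discs are orthogonal, by iterating `(z₂ - z₁)⟪y, x⟫ = ⟪y, (N - z₁) x⟫ - ⟪(N* - z̄₂) y, x⟫`.
Cutting the plane into small pieces makes `ran P(K) ⊥ ran Q(Uᶜ)` for compact `K ⊆ U` open, so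
`‖P(K) x‖ ≤ ‖Q(U) x‖`, and inner and outer regularity of the scalar measures give `P = Q`.
That `ran P(A)` reduces `N` is seen from the scalar measure of `u + c v`, `u ∈ ran P(A)`,
`v ∈ ran P(Aᶜ)`, which does not depend on the unimodular `c`.
-/

open scoped ComplexInnerProductSpace
open MeasureTheory

/-- A conjugation on a complex Hilbert space: a conjugate-linear involutive isometry. -/
def IsConjugation {H : Type*} [NormedAddCommGroup H] [InnerProductSpace ℂ H]
    (C : H → H) : Prop :=
  (∀ x y : H, C (x + y) = C x + C y) ∧
  (∀ (a : ℂ) (x : H), C (a • x) = (starRingEnd ℂ) a • C x) ∧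
  (∀ x : H, C (C x) = x) ∧
  (∀ h k : H, ⟪C h, C k⟫ = ⟪k, h⟫)

/-- `P` is the projection-valued spectral measure of the bounded normal operator `N`. -/
def IsSpectralMeasure {E : Type*} [NormedAddCommGroup E] [InnerProductSpace ℂ E]
    [CompleteSpace E] (N : E →L[ℂ] E) (P : Set ℂ → (E →L[ℂ] E)) : Prop :=
  (∀ Δ : Set ℂ, MeasurableSet Δ → ContinuousLinearMap.adjoint (P Δ) = P Δ) ∧
  (∀ A B : Set ℂ, MeasurableSet A → MeasurableSet B → P A ∘L P B = P (A ∩ B)) ∧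
  P Set.univ = 1 ∧
  (∀ s : ℕ → Set ℂ, (∀ n, MeasurableSet (s n)) → Pairwise (Function.onFun Disjoint s) →
    ∀ x : E, HasSum (fun n => P (s n) x) (P (⋃ n, s n) x)) ∧
  (∀ x : E, ∃ μ : Measure ℂ, IsFiniteMeasure μ ∧
    (∀ Δ : Set ℂ, MeasurableSet Δ → μ Δ = ENNReal.ofReal (‖P Δ x‖ ^ 2)) ∧
    ⟪x, N x⟫ = ∫ z, z ∂μ)

open scoped InnerProduct Pointwise ComplexConjugate

section ApproximateEigenvectors

variable {H : Type*} [NormedAddCommGroup H] [InnerProductSpace ℂ H]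

theorem norm_inner_le_of_norm_inner_self_le {T : H →L[ℂ] H} {S : Submodule ℂ H} {w : ℝ}
    (hw : ∀ u ∈ S, ‖⟪T u, u⟫‖ ≤ w * ‖u‖ ^ 2) {x y : H} (hx : x ∈ S) (hy : y ∈ S) :
    ‖⟪T x, y⟫‖ ≤ w * (‖x‖ ^ 2 + ‖y‖ ^ 2) := by
  have hIy : ‖Complex.I • y‖ = ‖y‖ := by rw [norm_smul, Complex.norm_I, one_mul]
  have h₁ := hw _ (S.add_mem hx hy)
  have h₂ := hw _ (S.sub_mem hx hy)
  have h₃ := hw _ (S.add_mem hx (S.smul_mem Complex.I hy))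
  have h₄ := hw _ (S.sub_mem hx (S.smul_mem Complex.I hy))
  have hpar₁ := parallelogram_law_with_norm ℂ x y
  have hpar₂ := parallelogram_law_with_norm ℂ x (Complex.I • y)
  rw [hIy] at hpar₂
  have hpol := inner_map_polarization' (T : H →ₗ[ℂ] H) x y
  simp only [ContinuousLinearMap.coe_coe] at hpol
  rw [hpol, norm_div, RCLike.norm_ofNat]
  have htri := norm_add₄_le (a := ⟪T (x + y), x + y⟫) (b := -⟪T (x - y), x - y⟫)
    (c := -(Complex.I * ⟪T (x + Complex.I • y), x + Complex.I • y⟫))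
    (d := Complex.I * ⟪T (x - Complex.I • y), x - Complex.I • y⟫)
  simp only [norm_neg, norm_mul, Complex.norm_I, one_mul, ← sub_eq_add_neg] at htri
  rw [div_le_iff₀ (by norm_num)]
  linear_combination htri + h₁ + h₂ + h₃ + h₄ + w * hpar₁ + w * hpar₂

theorem norm_apply_le_of_norm_inner_self_le {T : H →L[ℂ] H} {S : Submodule ℂ H} {w : ℝ}
    (hw₀ : 0 ≤ w) (hTS : ∀ u ∈ S, T u ∈ S) (hw : ∀ u ∈ S, ‖⟪T u, u⟫‖ ≤ w * ‖u‖ ^ 2)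
    {x : H} (hx : x ∈ S) : ‖T x‖ ≤ 2 * w * ‖x‖ := by
  rcases (norm_nonneg (T x)).eq_or_lt with hb | hb
  · rw [← hb]; positivity
  have ha : 0 < ‖x‖ := norm_pos_iff.2 fun hx0 => by simp [hx0] at hb
  -- polarization at `‖T x‖ • x` and `‖x‖ • T x`, which have the same norm
  have key := norm_inner_le_of_norm_inner_self_le hw (S.smul_mem (‖T x‖ : ℂ) hx)
    (S.smul_mem (‖x‖ : ℂ) (hTS x hx))
  have hinner : ‖⟪T ((‖T x‖ : ℂ) • x), (‖x‖ : ℂ) • T x⟫‖ = ‖T x‖ ^ 3 * ‖x‖ := by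
    rw [map_smul, inner_smul_left, inner_smul_right, inner_self_eq_norm_sq_to_K]
    simp only [norm_mul, RCLike.norm_conj, Complex.norm_real, norm_norm, norm_pow,
      RCLike.norm_ofReal, abs_norm]
    ring
  rw [hinner, norm_smul, norm_smul, Complex.norm_real, Complex.norm_real, norm_norm,
    norm_norm] at key
  nlinarith [mul_pos ha hb, mul_pos (mul_pos ha hb) hb]

variable [CompleteSpace H]

theorem inner_eq_zero_of_norm_sub_smul_le {N : H →L[ℂ] H} {X Y : Submodule ℂ H} {z₁ z₂ : ℂ}
    {a : ℝ} (ha : 0 ≤ a) (hfar : 2 * a < ‖z₁ - z₂‖)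
    (hNX : ∀ x ∈ X, N x ∈ X) (hNY : ∀ y ∈ Y, (N†) y ∈ Y)
    (hX : ∀ x ∈ X, ‖N x - z₁ • x‖ ≤ a * ‖x‖) (hY : ∀ y ∈ Y, ‖(N†) y - conj z₂ • y‖ ≤ a * ‖y‖)
    {x y : H} (hx : x ∈ X) (hy : y ∈ Y) : ⟪y, x⟫ = 0 := by
  set c := ‖z₁ - z₂‖
  have hc : 0 < c := by linarith
  have hshift : ∀ x y : H,
      (z₂ - z₁) * ⟪y, x⟫ = ⟪y, N x - z₁ • x⟫ - ⟪(N†) y - conj z₂ • y, x⟫ := by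
    intro x y
    rw [inner_sub_right, inner_sub_left, inner_smul_right, inner_smul_left,
      ContinuousLinearMap.adjoint_inner_left, Complex.conj_conj]
    ring
  -- each application of the shifted operators gains a factor `2 a / c < 1`
  have hdecay : ∀ k : ℕ, ∀ x ∈ X, ∀ y ∈ Y, c ^ k * ‖⟪y, x⟫‖ ≤ (2 * a) ^ k * (‖x‖ * ‖y‖) := by
    intro k
    induction k with
    | zero => intro x _ y _; simpa [mul_comm] using norm_inner_le_norm (𝕜 := ℂ) y x
    | succ k ih =>
      intro x hx y hy
      have hx' := ih _ (X.sub_mem (hNX x hx) (X.smul_mem z₁ hx)) y hy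
      have hy' := ih x hx _ (Y.sub_mem (hNY y hy) (Y.smul_mem (conj z₂) hy))
      calc c ^ (k + 1) * ‖⟪y, x⟫‖ = c ^ k * ‖(z₂ - z₁) * ⟪y, x⟫‖ := by
            rw [norm_mul, norm_sub_rev, pow_succ]; ring
        _ ≤ c ^ k * ‖⟪y, N x - z₁ • x⟫‖ + c ^ k * ‖⟪(N†) y - conj z₂ • y, x⟫‖ := by
            rw [hshift, ← mul_add]; gcongr; exact norm_sub_le _ _
        _ ≤ (2 * a) ^ k * (a * ‖x‖ * ‖y‖) + (2 * a) ^ k * (‖x‖ * (a * ‖y‖)) := by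
            refine add_le_add (hx'.trans ?_) (hy'.trans ?_)
            · gcongr; exact hX x hx
            · gcongr; exact hY y hy
        _ = (2 * a) ^ (k + 1) * (‖x‖ * ‖y‖) := by ring
  have hlim : Filter.Tendsto (fun k : ℕ => (2 * a / c) ^ k * (‖x‖ * ‖y‖)) Filter.atTop
      (nhds 0) := by
    simpa using (tendsto_pow_atTop_nhds_zero_of_lt_one (by positivity)
      ((div_lt_one hc).2 hfar)).mul_const (‖x‖ * ‖y‖)
  refine norm_le_zero_iff.mp (ge_of_tendsto hlim (Filter.Eventually.of_forall fun k => ?_))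
  rw [div_pow, div_mul_eq_mul_div, le_div_iff₀ (by positivity), mul_comm]
  exact hdecay k x hx y hy

end ApproximateEigenvectors

namespace IsSpectralMeasure

variable {H : Type*} [NormedAddCommGroup H] [InnerProductSpace ℂ H] [CompleteSpace H]
  {N : H →L[ℂ] H} {P Q : Set ℂ → (H →L[ℂ] H)} {A B : Set ℂ}

theorem apply_empty (hP : IsSpectralMeasure N P) : P ∅ = 0 := by
  ext x
  have hsum := hP.2.2.2.1 (fun _ => ∅) (fun _ => .empty) (fun _ _ _ => disjoint_bot_left) x
  rw [Set.iUnion_empty] at hsum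
  exact (tendsto_nhds_unique tendsto_const_nhds hsum.summable.tendsto_atTop_zero).trans rfl

theorem apply_apply (hP : IsSpectralMeasure N P) (hA : MeasurableSet A) (hB : MeasurableSet B)
    (x : H) : P A (P B x) = P (A ∩ B) x := by
  rw [← hP.2.1 A B hA hB, ContinuousLinearMap.comp_apply]

theorem apply_comm (hP : IsSpectralMeasure N P) (hA : MeasurableSet A) (hB : MeasurableSet B)
    (x : H) : P A (P B x) = P B (P A x) := by
  rw [hP.apply_apply hA hB, hP.apply_apply hB hA, Set.inter_comm]

theorem apply_idem (hP : IsSpectralMeasure N P) (hA : MeasurableSet A) (x : H) :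
    P A (P A x) = P A x := by
  rw [hP.apply_apply hA hA, Set.inter_self]

theorem inner_apply_left (hP : IsSpectralMeasure N P) (hA : MeasurableSet A) (x y : H) :
    ⟪P A x, y⟫ = ⟪x, P A y⟫ := by
  rw [← ContinuousLinearMap.adjoint_inner_right, hP.1 A hA]

theorem inner_apply_self (hP : IsSpectralMeasure N P) (hA : MeasurableSet A) (x : H) :
    ⟪P A x, x⟫ = (‖P A x‖ : ℂ) ^ 2 := by
  rw [← hP.apply_idem hA x, hP.inner_apply_left hA, hP.apply_idem hA x]
  exact_mod_cast inner_self_eq_norm_sq_to_K _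

theorem mem_range_iff (hP : IsSpectralMeasure N P) (hA : MeasurableSet A) {x : H} :
    x ∈ LinearMap.range (P A : H →ₗ[ℂ] H) ↔ P A x = x :=
  ⟨fun ⟨y, hy⟩ => hy ▸ hP.apply_idem hA y, fun h => ⟨x, h⟩⟩

theorem apply_add_apply_compl (hP : IsSpectralMeasure N P) (hA : MeasurableSet A) (x : H) :
    P A x + P Aᶜ x = x := by
  let s : ℕ → Set ℂ := fun n => if n = 0 then A else if n = 1 then Aᶜ else ∅
  have hs : ∀ n, MeasurableSet (s n) := fun n => by
    dsimp only [s]; split_ifs <;> simp [hA, hA.compl]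
  have hdisj : Pairwise (Function.onFun Disjoint s) := by
    intro i j hij
    simp only [Function.onFun, s]
    split_ifs <;> simp_all [disjoint_compl_right, disjoint_compl_left]
  have hunion : (⋃ n, s n) = Set.univ :=
    Set.eq_univ_of_forall fun z => Set.mem_iUnion.2 <| by
      by_cases hz : z ∈ A
      · exact ⟨0, by simp [s, hz]⟩
      · exact ⟨1, by simp [s, hz]⟩
  have hsum := hP.2.2.2.1 s hs hdisj x
  rw [hunion, hP.2.2.1] at hsum
  have hfin : HasSum (fun n => P (s n) x) (P (s 0) x + P (s 1) x) := by
    have hzero : ∀ n ∉ ({0, 1} : Finset ℕ), P (s n) x = 0 := fun n hn => by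
      simp only [Finset.mem_insert, Finset.mem_singleton, not_or] at hn
      simp [s, hn.1, hn.2, hP.apply_empty]
    simpa using hasSum_sum_of_ne_finset_zero hzero
  simpa [s] using (hsum.unique hfin).symm

theorem apply_compl_eq_zero_iff (hP : IsSpectralMeasure N P) (hA : MeasurableSet A) {x : H} :
    P Aᶜ x = 0 ↔ P A x = x := by
  constructor <;> intro h
  · simpa [h] using hP.apply_add_apply_compl hA x
  · rw [← h, hP.apply_apply hA.compl hA, Set.compl_inter_self, hP.apply_empty]; rfl

theorem inner_apply_apply_compl (hP : IsSpectralMeasure N P) (hA : MeasurableSet A) (x y : H) :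
    ⟪P A x, P Aᶜ y⟫ = 0 := by
  rw [hP.inner_apply_left hA, hP.apply_apply hA hA.compl, Set.inter_compl_self,
    hP.apply_empty, zero_apply, inner_zero_right]

theorem apply_eq_zero_of_inner_apply_self_eq_zero (hP : IsSpectralMeasure N P)
    (hA : MeasurableSet A) {x : H} (h : ⟪P A x, x⟫ = 0) : P A x = 0 := by
  rwa [hP.inner_apply_self hA, pow_eq_zero_iff two_ne_zero, Complex.ofReal_eq_zero,
    norm_eq_zero] at h

theorem inner_eq_zero_of_apply_compl (hP : IsSpectralMeasure N P) (hA : MeasurableSet A)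
    {u v : H} (hu : P A u = u) (hv : P Aᶜ v = v) : ⟪u, v⟫ = 0 := by
  rw [← hu, ← hv, hP.inner_apply_apply_compl hA]

/-- Both sides are first moments of the same scalar measure, as `P S u ⊥ P S v` for every `S`. -/
theorem inner_map_add_smul_of_norm_eq_one (hP : IsSpectralMeasure N P) (hA : MeasurableSet A)
    {u v : H} (hu : P A u = u) (hv : P Aᶜ v = v) {c : ℂ} (hc : ‖c‖ = 1) :
    ⟪u + c • v, N (u + c • v)⟫ = ⟪u + v, N (u + v)⟫ := by
  obtain ⟨μ, -, hμ, hμN⟩ := hP.2.2.2.2 (u + v)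
  obtain ⟨ν, -, hν, hνN⟩ := hP.2.2.2.2 (u + c • v)
  suffices hνμ : ν = μ by rw [hνN, hμN, hνμ]
  ext S hS
  have horth : ⟪P S u, P S v⟫ = 0 := hP.inner_eq_zero_of_apply_compl hA
    (by rw [hP.apply_comm hA hS, hu]) (by rw [hP.apply_comm hA.compl hS, hv])
  have hpyth : ∀ d : ℂ, ‖d‖ = 1 → ‖P S (u + d • v)‖ ^ 2 = ‖P S u‖ ^ 2 + ‖P S v‖ ^ 2 := by
    intro d hd
    rw [map_add, map_smul, sq, sq, sq,
      norm_add_sq_eq_norm_sq_add_norm_sq_of_inner_eq_zero (𝕜 := ℂ) _ _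
        (by rw [inner_smul_right, horth, mul_zero]), norm_smul, hd, one_mul]
  rw [hν S hS, hμ S hS, hpyth c hc, ← hpyth 1 norm_one, one_smul]

theorem inner_map_eq_zero_of_apply_compl (hP : IsSpectralMeasure N P) (hA : MeasurableSet A)
    {u v : H} (hu : P A u = u) (hv : P Aᶜ v = v) : ⟪u, N v⟫ = 0 := by
  have hq : ∀ c : ℂ, ⟪u + c • v, N (u + c • v)⟫ = ⟪u, N u⟫ + conj c * ⟪v, N u⟫ +
      c * ⟪u, N v⟫ + conj c * c * ⟪v, N v⟫ := fun c => by
    simp only [map_add, map_smul, inner_add_left, inner_add_right, inner_smul_left,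
      inner_smul_right]
    ring
  have hneg := hP.inner_map_add_smul_of_norm_eq_one hA hu hv (c := -1) (by simp)
  have hI := hP.inner_map_add_smul_of_norm_eq_one hA hu hv (c := Complex.I) (by simp)
  rw [hq, show u + v = u + (1 : ℂ) • v by rw [one_smul], hq] at hneg hI
  simp only [map_neg, map_one, Complex.conj_I, neg_mul, Complex.I_mul_I, neg_neg] at hneg hI
  linear_combination ((-1 + Complex.I) / 4) * hneg - (Complex.I / 2) * hI
    + ((⟪u, N v⟫ - ⟪v, N u⟫) / 2) * Complex.I_sq

theorem apply_map_eq_of_apply_eq (hP : IsSpectralMeasure N P) (hA : MeasurableSet A) {x : H}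
    (hx : P A x = x) : P A (N x) = N x := by
  refine (hP.apply_compl_eq_zero_iff hA).1
    (hP.apply_eq_zero_of_inner_apply_self_eq_zero hA.compl ?_)
  exact hP.inner_map_eq_zero_of_apply_compl hA.compl (hP.apply_idem hA.compl _)
    (by rwa [compl_compl])

theorem apply_adjoint_map_eq_of_apply_eq (hP : IsSpectralMeasure N P) (hA : MeasurableSet A) {x : H}
    (hx : P A x = x) : P A ((N†) x) = (N†) x := by
  refine (hP.apply_compl_eq_zero_iff hA).1
    (hP.apply_eq_zero_of_inner_apply_self_eq_zero hA.compl ?_)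
  rw [ContinuousLinearMap.adjoint_inner_right, ← inner_conj_symm,
    hP.inner_map_eq_zero_of_apply_compl hA hx (hP.apply_idem hA.compl _), map_zero]

theorem norm_inner_map_sub_smul_le (hP : IsSpectralMeasure N P) (hA : MeasurableSet A)
    {z₀ : ℂ} {ε : ℝ} (hAε : A ⊆ Metric.closedBall z₀ ε) {x : H} (hx : P A x = x) :
    ‖⟪x, N x - z₀ • x⟫‖ ≤ ε * ‖x‖ ^ 2 := by
  obtain ⟨μ, hμfin, hμ, hμN⟩ := hP.2.2.2.2 x
  have hball : ∀ᵐ z ∂μ, z ∈ Metric.closedBall z₀ ε := by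
    refine ae_iff.2 (measure_mono_null (Set.compl_subset_compl.2 hAε) ?_)
    rw [hμ _ hA.compl, (hP.apply_compl_eq_zero_iff hA).2 hx, norm_zero]
    simp
  have hint : Integrable (fun z : ℂ => z) μ :=
    (integrable_const (‖z₀‖ + ε)).mono' aestronglyMeasurable_id
      (hball.mono fun z hz => norm_le_of_mem_closedBall hz)
  have hmass : μ.real Set.univ = ‖x‖ ^ 2 := by
    rw [measureReal_def, hμ _ .univ, hP.2.2.1, one_apply_eq_self,
      ENNReal.toReal_ofReal (sq_nonneg _)]
  have hform : ⟪x, N x - z₀ • x⟫ = ∫ z, (z - z₀) ∂μ := by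
    rw [integral_sub hint (integrable_const z₀), integral_const, ← hμN, hmass, inner_sub_right,
      inner_smul_right, inner_self_eq_norm_sq_to_K, Complex.real_smul, mul_comm]
    push_cast; rfl
  rw [hform, ← hmass]
  exact norm_integral_le_of_norm_le_const (hball.mono fun z hz => by
    rwa [Metric.mem_closedBall, dist_eq_norm] at hz)

theorem norm_map_sub_smul_le (hP : IsSpectralMeasure N P) (hA : MeasurableSet A)
    {z₀ : ℂ} {ε : ℝ} (hε : 0 ≤ ε) (hAε : A ⊆ Metric.closedBall z₀ ε) {x : H}
    (hx : P A x = x) : ‖N x - z₀ • x‖ ≤ 2 * ε * ‖x‖ := by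
  have hT : ∀ u, (N - z₀ • 1 : H →L[ℂ] H) u = N u - z₀ • u := fun u => rfl
  rw [← hT]
  refine norm_apply_le_of_norm_inner_self_le (S := LinearMap.range (P A : H →ₗ[ℂ] H)) hε
    (fun u hu => ?_) (fun u hu => ?_) ((hP.mem_range_iff hA).2 hx)
  · rw [hP.mem_range_iff hA] at hu ⊢
    rw [hT, map_sub, map_smul, hP.apply_map_eq_of_apply_eq hA hu, hu]
  · rw [norm_inner_symm, hT]
    exact hP.norm_inner_map_sub_smul_le hA hAε ((hP.mem_range_iff hA).1 hu)

theorem norm_adjoint_map_sub_smul_le (hP : IsSpectralMeasure N P) (hA : MeasurableSet A)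
    {z₀ : ℂ} {ε : ℝ} (hε : 0 ≤ ε) (hAε : A ⊆ Metric.closedBall z₀ ε) {x : H}
    (hx : P A x = x) : ‖(N†) x - conj z₀ • x‖ ≤ 2 * ε * ‖x‖ := by
  have hT : ∀ u, (N† - conj z₀ • 1 : H →L[ℂ] H) u = (N†) u - conj z₀ • u := fun u => rfl
  rw [← hT]
  refine norm_apply_le_of_norm_inner_self_le (S := LinearMap.range (P A : H →ₗ[ℂ] H)) hε
    (fun u hu => ?_) (fun u hu => ?_) ((hP.mem_range_iff hA).2 hx)
  · rw [hP.mem_range_iff hA] at hu ⊢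
    rw [hT, map_sub, map_smul, hP.apply_adjoint_map_eq_of_apply_eq hA hu, hu]
  · rw [hT, inner_sub_left, ContinuousLinearMap.adjoint_inner_left, inner_smul_left,
      Complex.conj_conj, ← inner_smul_right, ← inner_sub_right]
    exact hP.norm_inner_map_sub_smul_le hA hAε ((hP.mem_range_iff hA).1 hu)

theorem inner_eq_zero_of_subset_closedBall (hP : IsSpectralMeasure N P)
    (hQ : IsSpectralMeasure N Q) {B₁ B₂ : Set ℂ} (hB₁ : MeasurableSet B₁)
    (hB₂ : MeasurableSet B₂) {z₁ z₂ : ℂ} {r : ℝ} (hr : 0 ≤ r)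
    (h₁ : B₁ ⊆ Metric.closedBall z₁ r) (h₂ : B₂ ⊆ Metric.closedBall z₂ r)
    (hfar : 4 * r < ‖z₁ - z₂‖) {x y : H} (hx : P B₁ x = x) (hy : Q B₂ y = y) :
    ⟪y, x⟫ = 0 := by
  simp only [← hP.mem_range_iff hB₁, ← hQ.mem_range_iff hB₂] at hx hy
  refine inner_eq_zero_of_norm_sub_smul_le (N := N) (a := 2 * r) (by positivity) (by linarith)
    (fun u hu => ?_) (fun u hu => ?_) (fun u hu => ?_) (fun u hu => ?_) hx hy
  · rw [hP.mem_range_iff hB₁] at hu ⊢; exact hP.apply_map_eq_of_apply_eq hB₁ hu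
  · rw [hQ.mem_range_iff hB₂] at hu ⊢; exact hQ.apply_adjoint_map_eq_of_apply_eq hB₂ hu
  · exact hP.norm_map_sub_smul_le hB₁ hr h₁ ((hP.mem_range_iff hB₁).1 hu)
  · exact hQ.norm_adjoint_map_sub_smul_le hB₂ hr h₂ ((hQ.mem_range_iff hB₂).1 hu)

theorem hasSum_apply_inter (hP : IsSpectralMeasure N P) {D : ℕ → Set ℂ}
    (hD : ∀ n, MeasurableSet (D n)) (hdisj : Pairwise (Function.onFun Disjoint D))
    (hcover : ⋃ n, D n = Set.univ) (hA : MeasurableSet A) {x : H} (hx : P A x = x) :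
    HasSum (fun n => P (D n ∩ A) x) x := by
  have hsum := hP.2.2.2.1 (fun n => D n ∩ A) (fun n => (hD n).inter hA)
    (fun i j hij => (hdisj hij).mono Set.inter_subset_left Set.inter_subset_left) x
  rwa [← Set.iUnion_inter, hcover, Set.univ_inter, hx] at hsum

/-- Cut the plane into countably many pieces of diameter `≤ d / 4` and apply
`inner_eq_zero_of_subset_closedBall` to each pair of pieces. -/
theorem inner_eq_zero_of_separated (hP : IsSpectralMeasure N P) (hQ : IsSpectralMeasure N Q)
    {S T : Set ℂ} (hS : MeasurableSet S) (hT : MeasurableSet T) {d : ℝ} (hd : 0 < d)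
    (hsep : ∀ s ∈ S, ∀ t ∈ T, d ≤ dist s t) {x y : H} (hx : P S x = x) (hy : Q T y = y) :
    ⟪y, x⟫ = 0 := by
  set r := d / 8
  set e := TopologicalSpace.denseSeq ℂ
  set D := disjointed fun n => Metric.closedBall (e n) r
  have hD : ∀ n, MeasurableSet (D n) := .disjointed fun _ => measurableSet_closedBall
  have hcover : ⋃ n, D n = Set.univ := by
    rw [iUnion_disjointed]
    refine Set.eq_univ_of_forall fun z => Set.mem_iUnion.2 ?_
    obtain ⟨n, hn⟩ := (TopologicalSpace.denseRange_denseSeq ℂ).exists_dist_lt z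
      (by positivity : 0 < r)
    exact ⟨n, Metric.mem_closedBall.2 hn.le⟩
  have hsx := hP.hasSum_apply_inter hD (disjoint_disjointed _) hcover hS hx
  have hsy := hQ.hasSum_apply_inter hD (disjoint_disjointed _) hcover hT hy
  have hpiece : ∀ n m, ⟪P (D n ∩ S) x, Q (D m ∩ T) y⟫ = 0 := by
    intro n m
    rcases (D n ∩ S).eq_empty_or_nonempty with hn | ⟨s, hsn, hs⟩
    · rw [hn, hP.apply_empty, zero_apply, inner_zero_left]
    rcases (D m ∩ T).eq_empty_or_nonempty with hm | ⟨t, htm, ht⟩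
    · rw [hm, hQ.apply_empty, zero_apply, inner_zero_right]
    have hsub : ∀ k (B : Set ℂ), D k ∩ B ⊆ Metric.closedBall (e k) r := fun k _ =>
      Set.inter_subset_left.trans (disjointed_subset _ k)
    rw [inner_eq_zero_symm]
    refine hP.inner_eq_zero_of_subset_closedBall hQ ((hD n).inter hS) ((hD m).inter hT)
      (by positivity) (hsub n S) (hsub m T) ?_ (hP.apply_idem ((hD n).inter hS) x)
      (hQ.apply_idem ((hD m).inter hT) y)
    have hsn' := Metric.mem_closedBall.1 (disjointed_subset _ n hsn)
    have htm' := Metric.mem_closedBall.1 (disjointed_subset _ m htm)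
    have := dist_triangle4 s (e n) (e m) t
    rw [dist_comm (e m) t] at this
    rw [← dist_eq_norm]
    linarith [hsep s hs t ht, show d = 8 * r by simp only [r]; ring]
  have hterm : ∀ n, ⟪y, P (D n ∩ S) x⟫ = 0 := fun n => by
    rw [inner_eq_zero_symm]
    exact (hsy.mapL (innerSL ℂ _)).unique (by simp [hpiece n])
  exact (hsx.mapL (innerSL ℂ y)).unique (by simp [hterm])

theorem norm_apply_le_of_isCompact_of_isOpen (hP : IsSpectralMeasure N P)
    (hQ : IsSpectralMeasure N Q) {K U : Set ℂ} (hK : IsCompact K) (hU : IsOpen U)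
    (hKU : K ⊆ U) (x : H) : ‖P K x‖ ≤ ‖Q U x‖ := by
  obtain ⟨d, hd, hthick⟩ := hK.exists_thickening_subset_open hU hKU
  have hsep : ∀ s ∈ K, ∀ t ∈ Uᶜ, d ≤ dist s t := fun s hs t ht => not_lt.1 fun hlt =>
    ht (hthick (Metric.mem_thickening_iff.2 ⟨s, hs, by rwa [dist_comm]⟩))
  set v := P K x
  have hQv : Q U v = v := by
    refine (hQ.apply_compl_eq_zero_iff hU.measurableSet).1
      (hQ.apply_eq_zero_of_inner_apply_self_eq_zero hU.measurableSet.compl ?_)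
    exact hP.inner_eq_zero_of_separated hQ hK.measurableSet hU.measurableSet.compl hd hsep
      (hP.apply_idem hK.measurableSet x) (hQ.apply_idem hU.measurableSet.compl v)
  have hv : (‖v‖ : ℂ) ^ 2 = ⟪v, Q U x⟫ := by
    rw [← hP.inner_apply_self hK.measurableSet, ← hQ.inner_apply_left hU.measurableSet, hQv]
  have hle : ‖v‖ ^ 2 ≤ ‖v‖ * ‖Q U x‖ := by
    have := congrArg norm hv
    rw [norm_pow, Complex.norm_real, norm_norm] at this
    exact this ▸ norm_inner_le_norm v (Q U x)
  nlinarith [norm_nonneg v, norm_nonneg (Q U x)]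

theorem norm_apply_le (hP : IsSpectralMeasure N P) (hQ : IsSpectralMeasure N Q)
    (hA : MeasurableSet A) (x : H) : ‖P A x‖ ≤ ‖Q A x‖ := by
  obtain ⟨μ, hμfin, hμ, -⟩ := hP.2.2.2.2 x
  obtain ⟨ν, hνfin, hν, -⟩ := hQ.2.2.2.2 x
  -- by regularity it suffices to compare compact subsets with open supersets
  have hKU : ∀ K U, IsCompact K → IsOpen U → K ⊆ U → μ K ≤ ν U := fun K U hK hU hKU => by
    rw [hμ K hK.measurableSet, hν U hU.measurableSet]
    gcongr
    exact hP.norm_apply_le_of_isCompact_of_isOpen hQ hK hU hKU x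
  have hμν : μ A ≤ ν A := by
    refine le_of_forall_lt fun r hr => ?_
    obtain ⟨K, hKA, hK, hrK⟩ := hA.exists_lt_isCompact hr
    refine hrK.trans_le (le_of_forall_gt fun s hs => ?_)
    obtain ⟨U, hAU, hU, hUs⟩ := Set.exists_isOpen_lt_of_lt A s hs
    exact (hKU K U hK hU (hKA.trans hAU)).trans_lt hUs
  rw [hμ A hA, hν A hA, ENNReal.ofReal_le_ofReal_iff (by positivity)] at hμν
  exact (pow_le_pow_iff_left₀ (norm_nonneg _) (norm_nonneg _) two_ne_zero).1 hμν

theorem apply_eq_apply (hP : IsSpectralMeasure N P) (hQ : IsSpectralMeasure N Q)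
    (hA : MeasurableSet A) : P A = Q A := by
  rw [← sub_eq_zero]
  apply ContinuousLinearMap.coe_injective
  refine (inner_map_self_eq_zero _).1 fun x => ?_
  rw [ContinuousLinearMap.coe_coe, sub_apply, inner_sub_left,
    hP.inner_apply_self hA, hQ.inner_apply_self hA,
    le_antisymm (hP.norm_apply_le hQ hA x) (hQ.norm_apply_le hP hA x), sub_self]

end IsSpectralMeasure

namespace IsConjugation

variable {H : Type*} [NormedAddCommGroup H] [InnerProductSpace ℂ H] {C : H → H}

theorem norm_apply (hC : IsConjugation C) (x : H) : ‖C x‖ = ‖x‖ := by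
  have h := hC.2.2.2 x x
  rw [inner_self_eq_norm_sq_to_K, inner_self_eq_norm_sq_to_K] at h
  exact (pow_left_inj₀ (norm_nonneg _) (norm_nonneg _) two_ne_zero).1 (by exact_mod_cast h)

theorem inner_apply_left_comm (hC : IsConjugation C) (x y : H) : ⟪C x, y⟫ = ⟪C y, x⟫ := by
  conv_lhs => rw [← hC.2.2.1 y]
  exact hC.2.2.2 x (C y)

def toAddMonoidHom (hC : IsConjugation C) : H →+ H := AddMonoidHom.mk' C hC.1

theorem continuous (hC : IsConjugation C) : Continuous C :=
  (AddMonoidHomClass.isometry_of_norm hC.toAddMonoidHom hC.norm_apply).continuous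

def conjCLM (hC : IsConjugation C) (T : H →L[ℂ] H) : H →L[ℂ] H where
  toFun x := C (T (C x))
  map_add' x y := by simp only [hC.1, map_add]
  map_smul' a x := by simp only [hC.2.1, map_smul, Complex.conj_conj, RingHom.id_apply]
  cont := hC.continuous.comp (T.continuous.comp hC.continuous)

@[simp]
theorem conjCLM_apply (hC : IsConjugation C) (T : H →L[ℂ] H) (x : H) :
    hC.conjCLM T x = C (T (C x)) := rfl

theorem conjCLM_comp (hC : IsConjugation C) (S T : H →L[ℂ] H) :
    hC.conjCLM S ∘L hC.conjCLM T = hC.conjCLM (S ∘L T) := by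
  ext x; simp [hC.2.2.1]

theorem conjCLM_one (hC : IsConjugation C) : hC.conjCLM 1 = 1 := by
  ext x; simp [hC.2.2.1]

theorem adjoint_conjCLM [CompleteSpace H] (hC : IsConjugation C) (T : H →L[ℂ] H) :
    (hC.conjCLM T)† = hC.conjCLM (T†) := by
  ext x
  refine ext_inner_right ℂ fun y => ?_
  rw [ContinuousLinearMap.adjoint_inner_left, conjCLM_apply, conjCLM_apply,
    hC.inner_apply_left_comm, ContinuousLinearMap.adjoint_inner_right, ← hC.2.2.2 (C x), hC.2.2.1]

end IsConjugation

theorem IsSpectralMeasure.conjCLM_neg {H : Type*} [NormedAddCommGroup H]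
    [InnerProductSpace ℂ H] [CompleteSpace H] {N : H →L[ℂ] H} {P : Set ℂ → (H →L[ℂ] H)}
    {C : H → H} (hP : IsSpectralMeasure N P) (hC : IsConjugation C)
    (hskew : ∀ x : H, C (N (C x)) = -((N†) x)) :
    IsSpectralMeasure N fun A => hC.conjCLM (P (-A)) := by
  refine ⟨fun A hA => ?_, fun A B hA hB => ?_, ?_, fun s hs hdisj x => ?_, fun x => ?_⟩ <;>
    dsimp only
  · rw [hC.adjoint_conjCLM, hP.1 _ hA.neg]
  · rw [hC.conjCLM_comp, hP.2.1 _ _ hA.neg hB.neg, Set.inter_neg]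
  · rw [Set.neg_univ, hP.2.2.1, hC.conjCLM_one]
  · have hsum := hP.2.2.2.1 (fun n => -s n) (fun n => (hs n).neg)
      (fun i j hij => (hdisj hij).preimage _) (C x)
    rw [← Set.iUnion_neg] at hsum
    exact hsum.map hC.toAddMonoidHom hC.continuous
  · obtain ⟨μ, hμfin, hμ, hμN⟩ := hP.2.2.2.2 (C x)
    have hform : ⟪C x, N (C x)⟫ = -⟪x, N x⟫ := by
      rw [← hC.2.2.1 (N (C x)), hskew, hC.2.2.2, inner_neg_left,
        ContinuousLinearMap.adjoint_inner_left]
    refine ⟨μ.map Neg.neg, inferInstance, fun A hA => ?_, ?_⟩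
    · rw [Measure.map_apply measurable_neg hA, show Neg.neg ⁻¹' A = -A from rfl, hμ _ hA.neg,
        IsConjugation.conjCLM_apply, hC.norm_apply]
    · rw [integral_map (f := fun z => z) measurable_neg.aemeasurable aestronglyMeasurable_id,
        integral_neg, ← hμN, hform, neg_neg]

theorem conjugation_restricts_to_symmetric_spectral_subspace_general {H : Type*}
    [NormedAddCommGroup H] [InnerProductSpace ℂ H] [CompleteSpace H]
    (N : H →L[ℂ] H)
    (EN : Set ℂ → (H →L[ℂ] H)) (hEN : IsSpectralMeasure N EN)
    (C : H → H) (hC : IsConjugation C)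
    (hskew : ∀ h : H, C (N (C h)) = -(ContinuousLinearMap.adjoint N h))
    (Δ : Set ℂ) (hΔm : MeasurableSet Δ) (hΔsym : ∀ z : ℂ, z ∈ Δ ↔ -z ∈ Δ) :
    (∀ h : H, h ∈ LinearMap.range (EN Δ : H →ₗ[ℂ] H) ↔ C h ∈ LinearMap.range (EN Δ : H →ₗ[ℂ] H)) ∧
    (∀ h ∈ LinearMap.range (EN Δ : H →ₗ[ℂ] H), N h ∈ LinearMap.range (EN Δ : H →ₗ[ℂ] H)) ∧
    (∀ h ∈ LinearMap.range (EN Δ : H →ₗ[ℂ] H),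
      ContinuousLinearMap.adjoint N h ∈ LinearMap.range (EN Δ : H →ₗ[ℂ] H)) ∧
    (∀ h ∈ LinearMap.range (EN Δ : H →ₗ[ℂ] H),
      C (N (C h)) = -(ContinuousLinearMap.adjoint N h)) := by
  have hneg : -Δ = Δ := Set.ext fun z => (hΔsym z).symm
  have hcomm : ∀ h, EN Δ (C h) = C (EN Δ h) := fun h => by
    have := DFunLike.congr_fun (hEN.apply_eq_apply (hEN.conjCLM_neg hC hskew) hΔm) (C h)
    rwa [IsConjugation.conjCLM_apply, hneg, hC.2.2.1] at this
  simp only [hEN.mem_range_iff hΔm]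
  refine ⟨fun h => ?_, fun h => hEN.apply_map_eq_of_apply_eq hΔm,
    fun h => hEN.apply_adjoint_map_eq_of_apply_eq hΔm, fun h _ => hskew h⟩
  rw [hcomm, (Function.LeftInverse.injective hC.2.2.1).eq_iff]

/-- If `CNC = -N*` and `Δ = -Δ`, then `C` leaves `ran E_N(Δ)` invariant, `ran E_N(Δ)`
reduces `N`, and the restrictions satisfy `C₀N₀C₀ = -N₀*`. -/
theorem conjugation_restricts_to_symmetric_spectral_subspace {H : Type*}
    [NormedAddCommGroup H] [InnerProductSpace ℂ H] [CompleteSpace H]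
    (N : H →L[ℂ] H)
    (hN : N ∘L ContinuousLinearMap.adjoint N = ContinuousLinearMap.adjoint N ∘L N)
    (EN : Set ℂ → (H →L[ℂ] H)) (hEN : IsSpectralMeasure N EN)
    (C : H → H) (hC : IsConjugation C)
    (hskew : ∀ h : H, C (N (C h)) = -(ContinuousLinearMap.adjoint N h))
    (Δ : Set ℂ) (hΔm : MeasurableSet Δ) (hΔsym : ∀ z : ℂ, z ∈ Δ ↔ -z ∈ Δ) :
    (∀ h : H, h ∈ LinearMap.range (EN Δ : H →ₗ[ℂ] H) ↔ C h ∈ LinearMap.range (EN Δ : H →ₗ[ℂ] H)) ∧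
    (∀ h ∈ LinearMap.range (EN Δ : H →ₗ[ℂ] H), N h ∈ LinearMap.range (EN Δ : H →ₗ[ℂ] H)) ∧
    (∀ h ∈ LinearMap.range (EN Δ : H →ₗ[ℂ] H),
      ContinuousLinearMap.adjoint N h ∈ LinearMap.range (EN Δ : H →ₗ[ℂ] H)) ∧
    (∀ h ∈ LinearMap.range (EN Δ : H →ₗ[ℂ] H),
      C (N (C h)) = -(ContinuousLinearMap.adjoint N h)) :=
  conjugation_restricts_to_symmetric_spectral_subspace_general N EN hEN C hC hskew Δ hΔm hΔsym
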